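/- For every natural number N, the derivation f_N annihilates the element z + z⁻¹ + xy of A, i.e. f_N(z + z⁻¹ + xy) = 0. -/

import Mathlib

open LaurentPolynomial

noncomputable section

/-- The ring `A = ℂ[x, y, z, z⁻¹]`: Laurent polynomials in `z` over `ℂ[x, y]`. -/
abbrev A : Type := LaurentPolynomial (MvPolynomial (Fin 2) ℂ)

/-- The variable `x`. -/
def Xv : A := C (MvPolynomial.X 0)

/-- The variable `y`. -/
def Yv : A := C (MvPolynomial.X 1)

/-- The variable `z`. -/
def Zv : A := T 1

/-- The variable `z⁻¹`. -/
def Zi : A := T (-1)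

/-! A direct computation shows that both `f` and `L = k̲ + k̲⁻¹` kill `c = z + z⁻¹ + xy`.
Since `[L, D] c = L (D c) - D (L c)`, every iterated commutator `f_N` then kills `c` as well. -/

theorem commutator_iterate_apply_eq_zero {M G : Type*} [AddGroup M] [FunLike G M M]
    [ZeroHomClass G M M] (L : G) (F : ℕ → G)
    (hF : ∀ n a, F (n + 1) a = L (F n a) - F n (L a)) {c : M} (hLc : L c = 0) (hF0c : F 0 c = 0)
    (n : ℕ) : F n c = 0 := by
  induction n with
  | zero => exact hF0c
  | succ n ih => rw [hF n, ih, hLc, map_zero, map_zero, sub_zero]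

theorem Zi_mul_Zv : Zi * Zv = 1 := by
  rw [Zi, Zv, ← T_add, neg_add_cancel, T_zero]

theorem Derivation.apply_Zi (D : Derivation ℂ A A) : D Zi = -Zi ^ 2 * D Zv :=
  D.leibniz_of_mul_eq_one Zi_mul_Zv

theorem Derivation.apply_Zv_add_Zi_add_Xv_mul_Yv (D : Derivation ℂ A A) :
    D (Zv + Zi + Xv * Yv) = (1 - Zi ^ 2) * D Zv + Xv * D Yv + Yv * D Xv := by
  rw [map_add, map_add, Derivation.leibniz, D.apply_Zi, smul_eq_mul, smul_eq_mul]
  ring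

theorem stmt5_general
    (f kk kk' : Derivation ℂ A A)
    (hfx : f Xv = -(Zv - Zi)) (hfy : f Yv = 0) (hfz : f Zv = Yv * Zv)
    (hkx : kk Xv = Xv * Zv) (hky : kk Yv = -(Yv * Zv)) (hkz : kk Zv = 0)
    (hk'x : kk' Xv = Xv * Zi) (hk'y : kk' Yv = -(Yv * Zi)) (hk'z : kk' Zv = 0)
    (F : ℕ → Derivation ℂ A A) (hF0 : F 0 = f)
    (hFs : ∀ (n : ℕ) (a : A), F (n + 1) a = (kk + kk') (F n a) - F n ((kk + kk') a))
    (N : ℕ) :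
    F N (Zv + Zi + Xv * Yv) = 0 := by
  refine commutator_iterate_apply_eq_zero (kk + kk') F hFs ?_ ?_ N
  · rw [Derivation.add_apply, Derivation.apply_Zv_add_Zi_add_Xv_mul_Yv,
      Derivation.apply_Zv_add_Zi_add_Xv_mul_Yv, hkx, hky, hkz, hk'x, hk'y, hk'z]
    ring
  · rw [hF0, Derivation.apply_Zv_add_Zi_add_Xv_mul_Yv, hfx, hfy, hfz]
    linear_combination (-(Yv * Zi)) * Zi_mul_Zv

/-- Every derivation `f_N` annihilates `z + z⁻¹ + xy`. -/
theorem stmt5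
    (e f kk kk' : Derivation ℂ A A)
    (hex : e Xv = 0) (hey : e Yv = Zv - Zi) (hez : e Zv = -(Xv * Zv))
    (hfx : f Xv = -(Zv - Zi)) (hfy : f Yv = 0) (hfz : f Zv = Yv * Zv)
    (hkx : kk Xv = Xv * Zv) (hky : kk Yv = -(Yv * Zv)) (hkz : kk Zv = 0)
    (hk'x : kk' Xv = Xv * Zi) (hk'y : kk' Yv = -(Yv * Zi)) (hk'z : kk' Zv = 0)
    (E F : ℕ → Derivation ℂ A A) (hE0 : E 0 = e) (hF0 : F 0 = f)
    (hEs : ∀ (n : ℕ) (a : A), E (n + 1) a = (kk + kk') (E n a) - E n ((kk + kk') a))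
    (hFs : ∀ (n : ℕ) (a : A), F (n + 1) a = (kk + kk') (F n a) - F n ((kk + kk') a))
    (N : ℕ) :
    F N (Zv + Zi + Xv * Yv) = 0 :=
  stmt5_general f kk kk' hfx hfy hfz hkx hky hkz hk'x hk'y hk'z F hF0 hFs N
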